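/- Let T be a finite rooted ordered tree and B = E(T) its BP encoding. The matched factors of B are exactly the encodings of the subtrees of T: (i) for every node v of T there is a position i with B[i] = '(' such that, setting c = find_close(B,i), the substring B[i..c] equals E(S_v) where S_v is the subtree of T rooted at v, and distinct nodes correspond to distinct positions i; (ii) conversely, for every position i with B[i] = '(' and c = find_close(B,i), there exists a node v of T with B[i..c] = E(S_v). -/

import Mathlib

/-- A finite rooted ordered tree: a single constructor taking the list of subtrees. -/
inductive OTree where
  | node : List OTree → OTree

/-- The BP encoding: E(node [T₁,…,T_d]) = '(' ++ E(T₁) ++ ⋯ ++ E(T_d) ++ ')',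
with `true` = '(' and `false` = ')'. -/
def enc : OTree → List Bool
  | .node ts => true :: ((ts.attach.map fun ⟨t, _⟩ => enc t).flatten ++ [false])

/-- The subtree of `T` rooted at the node addressed by a path of child indices
(0-based); `none` if the path is not a valid node address of `T`. -/
def subtreeAt : OTree → List ℕ → Option OTree
  | t, [] => some t
  | .node ts, n :: p =>
    match ts[n]? with
    | some t => subtreeAt t p
    | none => none

/-- The (1-based) substring `B[i..c]`, from position `i` to position `c` inclusive. -/
def seg (B : List Bool) (i c : ℕ) : List Bool :=
  (B.drop (i - 1)).take (c - i + 1)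

/-- `c` is a position with `i < c ≤ |B|` such that `B[i..c]` contains
equally many '(' and ')'. -/
def matchAt (B : List Bool) (i c : ℕ) : Prop :=
  i < c ∧ c ≤ B.length ∧ (seg B i c).count true = (seg B i c).count false

/-- `c = find_close(B,i)`: the smallest `c > i` such that `B[i..c]` contains
equally many '(' and ')'. -/
def isFindClose (B : List Bool) (i c : ℕ) : Prop :=
  matchAt B i c ∧ ∀ c', matchAt B i c' → c ≤ c'

def encL (ts : List OTree) : List Bool := (ts.map enc).flatten

lemma enc_node (ts : List OTree) : enc (.node ts) = true :: (encL ts ++ [false]) := by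
  simp [enc, encL, List.attach_map_val]

lemma encL_cons (t : OTree) (ts : List OTree) : encL (t :: ts) = enc t ++ encL ts := by
  simp [encL]

lemma len_enc (ts : List OTree) : (enc (.node ts)).length = (encL ts).length + 2 := by
  simp [enc_node]

lemma two_le_len (t : OTree) : 2 ≤ (enc t).length := by
  cases t with
  | node ts => rw [len_enc]; omega

mutual
theorem balance : ∀ t : OTree, (enc t).count false = (enc t).count true
  | .node ts => by
    have h := balanceL ts
    simp [enc_node, List.count_cons, List.count_append]
    omega
termination_by t => sizeOf t
theorem balanceL : ∀ ts : List OTree, (encL ts).count false = (encL ts).count true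
  | [] => by simp [encL]
  | t :: ts => by
    have h1 := balance t
    have h2 := balanceL ts
    simp [encL_cons, List.count_append]
    omega
termination_by ts => sizeOf ts
end

mutual
theorem takeGe : ∀ (t : OTree) (j : ℕ),
    (((enc t).take j).count false : ℕ) ≤ ((enc t).take j).count true
  | .node ts, j => by
    cases j with
    | zero => simp
    | succ j =>
      rw [enc_node, List.take_succ_cons]
      rcases le_or_gt j (encL ts).length with h | h
      · rw [List.take_append_of_le_length h]
        have := takeGeL ts j
        simp [List.count_cons]; omega
      · have : (encL ts ++ [false]).take j = encL ts ++ [false] := by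
          apply List.take_of_length_le; simp; omega
        rw [this]
        have := balanceL ts
        simp [List.count_cons, List.count_append]; omega
termination_by t => sizeOf t
theorem takeGeL : ∀ (ts : List OTree) (j : ℕ),
    (((encL ts).take j).count false : ℕ) ≤ ((encL ts).take j).count true
  | [], j => by simp [encL]
  | t :: ts, j => by
    rw [encL_cons, List.take_append, List.count_append, List.count_append]
    have h1 := takeGe t j
    have h2 := takeGeL ts (j - (enc t).length)
    omega
termination_by ts => sizeOf ts
end

theorem takeGT (t : OTree) (j : ℕ) (h1 : 1 ≤ j) (h2 : j < (enc t).length) :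
    (((enc t).take j).count false : ℕ) < ((enc t).take j).count true := by
  cases t with
  | node ts =>
    obtain ⟨j, rfl⟩ : ∃ k, j = k + 1 := ⟨j - 1, by omega⟩
    rw [len_enc] at h2
    rw [enc_node, List.take_succ_cons, List.take_append_of_le_length (by omega)]
    have := takeGeL ts j
    simp [List.count_cons]; omega

def offs (ts : List OTree) (n : ℕ) : ℕ := (encL (ts.take n)).length

def posIn : OTree → List ℕ → ℕ
  | _, [] => 1
  | .node ts, n :: p =>
    1 + offs ts n + (match ts[n]? with | some t => posIn t p | none => 0)

lemma encL_append (l₁ l₂ : List OTree) : encL (l₁ ++ l₂) = encL l₁ ++ encL l₂ := by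
  simp [encL]

lemma offs_succ (ts : List OTree) (n : ℕ) (t : OTree) (h : ts[n]? = some t) :
    offs ts (n + 1) = offs ts n + (enc t).length := by
  unfold offs
  rw [List.take_succ, h]
  simp [encL_append, encL]

lemma offs_mono (ts : List OTree) {m n : ℕ} (h : m ≤ n) : offs ts m ≤ offs ts n := by
  induction n with
  | zero => interval_cases m; rfl
  | succ n ih =>
    rcases Nat.lt_or_ge m (n+1) with h' | h'
    · refine le_trans (ih (by omega)) ?_
      unfold offs
      rw [List.take_succ]
      simp [encL_append]
    · have : m = n + 1 := by omega
      subst this; rfl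

lemma offs_le (ts : List OTree) (n : ℕ) : offs ts n ≤ (encL ts).length := by
  conv_rhs => rw [← List.take_append_drop n ts]
  rw [encL_append]
  simp [offs]

lemma encL_decomp (ts : List OTree) (n : ℕ) (t : OTree) (h : ts[n]? = some t) :
    encL ts = encL (ts.take n) ++ (enc t ++ encL (ts.drop (n + 1))) := by
  conv_lhs => rw [← List.take_append_drop n ts]
  rw [encL_append]
  congr 1
  have hn : n < ts.length := by
    by_contra hc
    rw [List.getElem?_eq_none (by omega)] at h
    cases h
  rw [List.drop_eq_getElem_cons hn, encL_cons]
  simp_all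

lemma posIn_bounds : ∀ (v : List ℕ) (t s : OTree), subtreeAt t v = some s →
    1 ≤ posIn t v ∧ posIn t v ≤ (enc t).length - 1 := by
  intro v
  induction v with
  | nil =>
    intro t s h
    have := two_le_len t
    simp [posIn]; omega
  | cons n p ih =>
    intro t s h
    cases t with
    | node ts =>
      rw [subtreeAt] at h
      cases htn : ts[n]? with
      | none => rw [htn] at h; simp at h
      | some tn =>
        rw [htn] at h
        have hb := ih tn s h
        have h1 : posIn (.node ts) (n :: p) = 1 + offs ts n + posIn tn p := by
          rw [posIn, htn]
        have h2 := offs_succ ts n tn htn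
        have h3 := offs_le ts (n+1)
        have h4 := len_enc ts
        have h5 := two_le_len tn
        omega

lemma posIn_cons (ts : List OTree) (n : ℕ) (p : List ℕ) (tn : OTree) (h : ts[n]? = some tn) :
    posIn (.node ts) (n :: p) = 1 + offs ts n + posIn tn p := by
  rw [posIn, h]

lemma subtreeAt_cons (ts : List OTree) (n : ℕ) (p : List ℕ) (tn : OTree) (h : ts[n]? = some tn) :
    subtreeAt (.node ts) (n :: p) = subtreeAt tn p := by
  rw [subtreeAt, h]

lemma posIn_inj : ∀ (v₁ v₂ : List ℕ) (t s₁ s₂ : OTree), subtreeAt t v₁ = some s₁ →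
    subtreeAt t v₂ = some s₂ → posIn t v₁ = posIn t v₂ → v₁ = v₂ := by
  intro v₁
  induction v₁ with
  | nil =>
    intro v₂ t s₁ s₂ h1 h2 he
    cases v₂ with
    | nil => rfl
    | cons n p =>
      cases t with
      | node ts =>
        rw [subtreeAt] at h2
        cases htn : ts[n]? with
        | none => rw [htn] at h2; simp at h2
        | some tn =>
          rw [htn] at h2
          have := (posIn_bounds p tn s₂ h2).1
          rw [posIn_cons ts n p tn htn] at he
          simp [posIn] at he; omega
  | cons n₁ p₁ ih =>
    intro v₂ t s₁ s₂ h1 h2 he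
    cases t with
    | node ts =>
      rw [subtreeAt] at h1
      cases htn₁ : ts[n₁]? with
      | none => rw [htn₁] at h1; simp at h1
      | some tn₁ =>
        rw [htn₁] at h1
        rw [posIn_cons ts n₁ p₁ tn₁ htn₁] at he
        cases v₂ with
        | nil =>
          have := (posIn_bounds p₁ tn₁ s₁ h1).1
          simp [posIn] at he; omega
        | cons n₂ p₂ =>
          rw [subtreeAt] at h2
          cases htn₂ : ts[n₂]? with
          | none => rw [htn₂] at h2; simp at h2
          | some tn₂ =>
            rw [htn₂] at h2
            rw [posIn_cons ts n₂ p₂ tn₂ htn₂] at he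
            have hb₁ := posIn_bounds p₁ tn₁ s₁ h1
            have hb₂ := posIn_bounds p₂ tn₂ s₂ h2
            have hn : n₁ = n₂ := by
              by_contra hne
              rcases Nat.lt_or_ge n₁ n₂ with hlt | hge
              · have o1 := offs_succ ts n₁ tn₁ htn₁
                have o2 := offs_mono ts (show n₁ + 1 ≤ n₂ by omega)
                have := two_le_len tn₁
                omega
              · have o1 := offs_succ ts n₂ tn₂ htn₂
                have o2 := offs_mono ts (show n₂ + 1 ≤ n₁ by omega)
                have := two_le_len tn₂
                omega
            subst hn
            rw [htn₁] at htn₂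
            injection htn₂ with h'
            subst h'
            have : p₁ = p₂ := ih p₂ tn₁ s₁ s₂ h1 h2 (by omega)
            rw [this]

lemma prefix_at : ∀ (v : List ℕ) (t s : OTree), subtreeAt t v = some s →
    enc s <+: (enc t).drop (posIn t v - 1) := by
  intro v
  induction v with
  | nil =>
    intro t s h
    simp only [subtreeAt] at h
    injection h with h
    subst h
    simp [posIn]
  | cons n p ih =>
    intro t s h
    cases t with
    | node ts =>
      rw [subtreeAt] at h
      cases htn : ts[n]? with
      | none => rw [htn] at h; simp at h
      | some tn =>
        rw [htn] at h
        have hb := posIn_bounds p tn s h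
        rw [posIn_cons ts n p tn htn, enc_node]
        have hk : 1 + offs ts n + posIn tn p - 1 = (offs ts n + posIn tn p - 1) + 1 := by omega
        rw [hk, List.drop_succ_cons, encL_decomp ts n tn htn, List.append_assoc,
          List.drop_append]
        have hlen : offs ts n + posIn tn p - 1 - (encL (ts.take n)).length = posIn tn p - 1 := by
          have : (encL (ts.take n)).length = offs ts n := rfl
          omega
        have hz : (encL (ts.take n)).drop (offs ts n + posIn tn p - 1) = [] := by
          apply List.drop_eq_nil_of_le
          have : (encL (ts.take n)).length = offs ts n := rfl
          omega
        rw [hlen, hz, List.nil_append, List.append_assoc, List.drop_append]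
        have h2 : posIn tn p - 1 - (enc tn).length = 0 := by
          have := two_le_len tn; omega
        rw [h2, List.drop_zero]
        exact (ih tn s h).trans (List.prefix_append _ _)

mutual
theorem exists_addr : ∀ (t : OTree) (j : ℕ), (enc t)[j]? = some true →
    ∃ v s, subtreeAt t v = some s ∧ posIn t v = j + 1
  | .node ts, j => by
    intro h
    cases j with
    | zero => exact ⟨[], .node ts, rfl, rfl⟩
    | succ j =>
      rw [enc_node, List.getElem?_cons_succ] at h
      have hj : j < (encL ts).length := by
        rcases Nat.lt_or_ge j (encL ts).length with h' | h'
        · exact h'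
        · exfalso
          rcases Nat.lt_or_ge j ((encL ts).length + 1) with h'' | h''
          · have he : j = (encL ts).length := by omega
            subst he
            rw [List.getElem?_append_right (le_refl _)] at h
            simp at h
          · rw [List.getElem?_eq_none (by simp; omega)] at h
            cases h
      rw [List.getElem?_append_left hj] at h
      obtain ⟨n, tn, p, s, htn, hsub, hpos⟩ := exists_addrL ts j h
      exact ⟨n :: p, s, by rw [subtreeAt_cons ts n p tn htn]; exact hsub,
        by rw [posIn_cons ts n p tn htn]; omega⟩
termination_by t => sizeOf t
theorem exists_addrL : ∀ (ts : List OTree) (j : ℕ), (encL ts)[j]? = some true →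
    ∃ n tn p s, ts[n]? = some tn ∧ subtreeAt tn p = some s ∧ offs ts n + posIn tn p = j + 1
  | [], j => by intro h; simp [encL] at h
  | t :: ts, j => by
    intro h
    rw [encL_cons] at h
    rcases Nat.lt_or_ge j (enc t).length with h' | h'
    · rw [List.getElem?_append_left h'] at h
      obtain ⟨v, s, hsub, hpos⟩ := exists_addr t j h
      refine ⟨0, t, v, s, by simp, hsub, ?_⟩
      have : offs (t :: ts) 0 = 0 := by simp [offs, encL]
      omega
    · rw [List.getElem?_append_right h'] at h
      obtain ⟨n, tn, p, s, htn, hsub, hpos⟩ := exists_addrL ts (j - (enc t).length) h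
      refine ⟨n + 1, tn, p, s, by simpa using htn, hsub, ?_⟩
      have : offs (t :: ts) (n + 1) = (enc t).length + offs ts n := by
        simp [offs, List.take_succ_cons, encL_cons]
      omega
termination_by ts => sizeOf ts
end

theorem fc_char (B : List Bool) (i : ℕ) (s : OTree) (hi : 1 ≤ i)
    (hpre : enc s <+: B.drop (i - 1)) :
    isFindClose B i (i + (enc s).length - 1) ∧
      ∀ c, isFindClose B i c → seg B i c = enc s := by
  obtain ⟨r, hr⟩ := hpre
  have hn2 : 2 ≤ (enc s).length := two_le_len s
  set n := (enc s).length with hn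
  have hlen : n + r.length = B.length - (i - 1) := by
    have := congrArg List.length hr
    simp at this
    omega
  have hBlen : i + n - 1 ≤ B.length := by omega
  have hseg : ∀ c, i ≤ c → c ≤ i + n - 1 → seg B i c = (enc s).take (c - i + 1) := by
    intro c h1 h2
    unfold seg
    rw [← hr, List.take_append]
    have : (c - i + 1) - n = 0 := by omega
    rw [this, List.take_zero, List.append_nil]
  have hmatch : matchAt B i (i + n - 1) := by
    refine ⟨by omega, hBlen, ?_⟩
    rw [hseg _ (by omega) (le_refl _)]
    have he : (i + n - 1) - i + 1 = n := by omega
    rw [he, hn, List.take_length]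
    exact (balance s).symm
  have hmin : ∀ c', matchAt B i c' → i + n - 1 ≤ c' := by
    intro c' hm
    obtain ⟨hc1, hc2, hc3⟩ := hm
    by_contra hc
    push_neg at hc
    rw [hseg c' (by omega) (by omega)] at hc3
    have := takeGT s (c' - i + 1) (by omega) (by omega)
    omega
  refine ⟨⟨hmatch, hmin⟩, ?_⟩
  intro c hfc
  obtain ⟨hm, hmin'⟩ := hfc
  have h1 := hmin' _ hmatch
  have h2 := hmin _ hm
  have he : c = i + n - 1 := by omega
  subst he
  rw [hseg _ (by omega) (le_refl _)]
  have he : (i + n - 1) - i + 1 = n := by omega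
  rw [he, hn, List.take_length]

lemma enc_getElem_true (t : OTree) (B : List Bool) (k : ℕ)
    (hpre : enc t <+: B.drop k) : B[k]? = some true := by
  obtain ⟨r, hr⟩ := hpre
  have h0 : (B.drop k)[0]? = some true := by
    rw [← hr]
    cases t with
    | node ts => rw [enc_node]; simp
  rw [List.getElem?_drop] at h0
  simpa using h0


/-- the matched factors of `B = E(T)` are exactly the encodings of
the subtrees of `T`: (i) there is an assignment of a position `pos v` to every
node `v` of `T` (nodes are given by their valid addresses, distinct nodes getting
distinct positions) with `B[pos v] = '('` and `B[pos v .. find_close(B, pos v)] = E(S_v)`;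
(ii) conversely every position `i` with `B[i] = '('` and `c = find_close(B,i)`
satisfies `B[i..c] = E(S_v)` for some node `v` of `T`. -/
theorem stmt8 (T : OTree) :
    (∃ pos : List ℕ → ℕ,
      (∀ v₁ v₂ : List ℕ, (subtreeAt T v₁).isSome → (subtreeAt T v₂).isSome →
        pos v₁ = pos v₂ → v₁ = v₂) ∧
      (∀ (v : List ℕ) (t : OTree), subtreeAt T v = some t →
        1 ≤ pos v ∧ pos v ≤ (enc T).length ∧ (enc T)[pos v - 1]? = some true ∧
        ∀ c, isFindClose (enc T) (pos v) c → seg (enc T) (pos v) c = enc t)) ∧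
    (∀ i c, 1 ≤ i → i ≤ (enc T).length → (enc T)[i - 1]? = some true →
      isFindClose (enc T) i c →
      ∃ (v : List ℕ) (t : OTree), subtreeAt T v = some t ∧ seg (enc T) i c = enc t) := by
  constructor
  · refine ⟨posIn T, ?_, ?_⟩
    · intro v₁ v₂ h1 h2 he
      rw [Option.isSome_iff_exists] at h1 h2
      obtain ⟨s₁, h1⟩ := h1
      obtain ⟨s₂, h2⟩ := h2
      exact posIn_inj v₁ v₂ T s₁ s₂ h1 h2 he
    · intro v t hsub
      have hb := posIn_bounds v T t hsub
      have hpre := prefix_at v T t hsub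
      have h2 := two_le_len T
      refine ⟨hb.1, by omega, enc_getElem_true t _ _ hpre, ?_⟩
      exact (fc_char (enc T) (posIn T v) t hb.1 hpre).2
  · intro i c h1 h2 h3 hfc
    obtain ⟨v, s, hsub, hpos⟩ := exists_addr T (i - 1) h3
    refine ⟨v, s, hsub, ?_⟩
    have hpre := prefix_at v T s hsub
    rw [hpos] at hpre
    have hi : i - 1 + 1 = i := by omega
    rw [hi] at hpre
    exact (fc_char (enc T) i s h1 hpre).2 c hfc
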